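/- arXiv:1609.06788 — 7 statements merged into one kernel-verified Lean document; each statement's English description precedes it below -/
import Mathlib

section
/- Let M be a right R-module. The following are equivalent: (1) M is an SSP module; (2) for every split monomorphism f: A → M where A is a direct summand of M, the submodule A + Im(f) is a direct summand of M; (3) for every split epimorphism f: M → M/A where A is a direct summand of M, the submodule A + Ker(f) is a direct summand of M. -/
universe u v w

section Defs

variable {S : Type u} [Ring S]

/-- A submodule `A` is a direct summand of `M`. -/
def IsDirectSummand {M : Type v} [AddCommGroup M] [Module S M] (A : Submodule S M) : Prop :=
  ∃ B : Submodule S M, A ⊓ B = ⊥ ∧ A ⊔ B = ⊤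

/-- `A` is an essential submodule of `B`. -/
def IsEssentialIn {M : Type v} [AddCommGroup M] [Module S M] (A B : Submodule S M) : Prop :=
  A ≤ B ∧ ∀ K : Submodule S M, K ≤ B → K ≠ ⊥ → A ⊓ K ≠ ⊥

/-- `A` is essential in some direct summand of `M`. -/
def EssentialInSummand {M : Type v} [AddCommGroup M] [Module S M] (A : Submodule S M) : Prop :=
  ∃ D : Submodule S M, IsDirectSummand D ∧ IsEssentialIn A D

/-- `A` is a small (superfluous) submodule of `M`. -/
def IsSmallSubmodule {M : Type v} [AddCommGroup M] [Module S M] (A : Submodule S M) : Prop :=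
  ∀ K : Submodule S M, A ⊔ K = ⊤ → K = ⊤

/-- `A` lies above the direct summand `D` of `M`, i.e. `D ≤ A` and `A/D` is small in `M/D`. -/
def LiesAbove {M : Type v} [AddCommGroup M] [Module S M] (A D : Submodule S M) : Prop :=
  IsDirectSummand D ∧ D ≤ A ∧ IsSmallSubmodule (Submodule.map D.mkQ A)

/-- `A` lies above some direct summand of `M`. -/
def LiesAboveSummand {M : Type v} [AddCommGroup M] [Module S M] (A : Submodule S M) : Prop :=
  ∃ D : Submodule S M, LiesAbove A D

end Defs

section ModDefs

variable (S : Type u) [Ring S]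

/-- SSP: the sum of any two direct summands is a direct summand. -/
def HasSSP (M : Type v) [AddCommGroup M] [Module S M] : Prop :=
  ∀ A B : Submodule S M, IsDirectSummand A → IsDirectSummand B → IsDirectSummand (A ⊔ B)

/-- SIP: the intersection of any two direct summands is a direct summand. -/
def HasSIP (M : Type v) [AddCommGroup M] [Module S M] : Prop :=
  ∀ A B : Submodule S M, IsDirectSummand A → IsDirectSummand B → IsDirectSummand (A ⊓ B)

/-- SIP-CS: the intersection of any finite family of direct summands is essential in a
direct summand. -/
def IsSIPCS (M : Type v) [AddCommGroup M] [Module S M] : Prop :=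
  ∀ (ι : Type) [Fintype ι] (A : ι → Submodule S M),
    (∀ i, IsDirectSummand (A i)) → EssentialInSummand (⨅ i, A i)

/-- SSP-lifting: if each member of a finite family of submodules lies above a direct summand,
then their sum lies above a direct summand. -/
def IsSSPLifting (M : Type v) [AddCommGroup M] [Module S M] : Prop :=
  ∀ (ι : Type) [Fintype ι] (A : ι → Submodule S M),
    (∀ i, LiesAboveSummand (A i)) → LiesAboveSummand (⨆ i, A i)

/-- C2 condition: every submodule isomorphic to a direct summand is a direct summand. -/
def HasC2 (M : Type v) [AddCommGroup M] [Module S M] : Prop :=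
  ∀ A B : Submodule S M, IsDirectSummand B → Nonempty (A ≃ₗ[S] B) → IsDirectSummand A

/-- C3 condition: the sum of two direct summands with zero intersection is a direct summand. -/
def HasC3 (M : Type v) [AddCommGroup M] [Module S M] : Prop :=
  ∀ A B : Submodule S M, IsDirectSummand A → IsDirectSummand B → A ⊓ B = ⊥ →
    IsDirectSummand (A ⊔ B)

/-- D2 condition: if `M/A` is isomorphic to a direct summand of `M` then `A` is a direct
summand. -/
def HasD2 (M : Type v) [AddCommGroup M] [Module S M] : Prop :=
  ∀ A : Submodule S M, (∃ B : Submodule S M, IsDirectSummand B ∧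
    Nonempty ((M ⧸ A) ≃ₗ[S] B)) → IsDirectSummand A

/-- D3 condition: if two direct summands sum to `M`, their intersection is a direct summand. -/
def IsD3Module (M : Type v) [AddCommGroup M] [Module S M] : Prop :=
  ∀ A B : Submodule S M, IsDirectSummand A → IsDirectSummand B → A ⊔ B = ⊤ →
    IsDirectSummand (A ⊓ B)

/-- `M` is relatively CS-Rickart to `N`. -/
def RelCSRickart (M : Type v) (N : Type w) [AddCommGroup M] [Module S M]
    [AddCommGroup N] [Module S N] : Prop :=
  ∀ φ : M →ₗ[S] N, EssentialInSummand (LinearMap.ker φ)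

/-- `M` is relatively d-CS-Rickart to `N`. -/
def RelDCSRickart (M : Type v) (N : Type w) [AddCommGroup M] [Module S M]
    [AddCommGroup N] [Module S N] : Prop :=
  ∀ φ : N →ₗ[S] M, LiesAboveSummand (LinearMap.range φ)

/-- CS-Rickart module. -/
def IsCSRickart (M : Type v) [AddCommGroup M] [Module S M] : Prop :=
  RelCSRickart S M M

/-- d-CS-Rickart module. -/
def IsDCSRickart (M : Type v) [AddCommGroup M] [Module S M] : Prop :=
  RelDCSRickart S M M

/-- `M` has an `Ω`-cover, where `Ω` is the class of modules satisfying `P`. -/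
def HasCover (P : ModuleCat.{v} S → Prop) (M : Type v) [AddCommGroup M] [Module S M] : Prop :=
  ∃ (E : ModuleCat.{v} S) (g : E →ₗ[S] M), P E ∧
    (∀ (E' : ModuleCat.{v} S), P E' → ∀ g' : E' →ₗ[S] M,
      ∃ h : E' →ₗ[S] E, g ∘ₗ h = g') ∧
    (∀ h : E →ₗ[S] E, g ∘ₗ h = g → Function.Bijective h)

/-- `M` has an `Ω`-envelope, where `Ω` is the class of modules satisfying `P`. -/
def HasEnvelope (P : ModuleCat.{v} S → Prop) (M : Type v) [AddCommGroup M] [Module S M] : Prop :=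
  ∃ (E : ModuleCat.{v} S) (g : M →ₗ[S] E), P E ∧
    (∀ (E' : ModuleCat.{v} S), P E' → ∀ g' : M →ₗ[S] E',
      ∃ h : E →ₗ[S] E', h ∘ₗ g = g') ∧
    (∀ h : E →ₗ[S] E, h ∘ₗ g = g → Function.Bijective h)

/-- `M` is 2-generated. -/
def TwoGenerated (M : Type v) [AddCommGroup M] [Module S M] : Prop :=
  ∃ a b : M, Submodule.span S ({a, b} : Set M) = ⊤

/-- `M` is finitely cogenerated. -/
def FinitelyCogenerated (M : Type v) [AddCommGroup M] [Module S M] : Prop :=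
  ∀ 𝒜 : Set (Submodule S M), sInf 𝒜 = ⊥ →
    ∃ ℬ ⊆ 𝒜, ℬ.Finite ∧ sInf ℬ = ⊥

/-- The socle of `M`: the sum of all simple submodules. -/
def SocleOf (M : Type v) [AddCommGroup M] [Module S M] : Submodule S M :=
  sSup {A : Submodule S M | IsSimpleModule S ↥A}

/-- An indecomposable module: nonzero, and its only direct summands are `0` and itself. -/
def IsIndecomposable (M : Type v) [AddCommGroup M] [Module S M] : Prop :=
  (⊤ : Submodule S M) ≠ ⊥ ∧
    ∀ A : Submodule S M, IsDirectSummand A → A = ⊥ ∨ A = ⊤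

end ModDefs

section RingDefs

variable (R : Type u) [Ring R]

/-- The right annihilator of an element of a right `R`-module, as a right ideal of `R`. -/
def rightAnnihilator {M : Type v} [AddCommGroup M] [Module Rᵐᵒᵖ M] (m : M) :
    Submodule Rᵐᵒᵖ R where
  carrier := {r : R | MulOpposite.op r • m = 0}
  add_mem' := by
    intro a b ha hb
    simp only [Set.mem_setOf_eq] at *
    rw [MulOpposite.op_add, add_smul, ha, hb, add_zero]
  zero_mem' := by simp
  smul_mem' := by
    intro c x hx
    simp only [Set.mem_setOf_eq] at *
    have : MulOpposite.op (c • x) = c * MulOpposite.op x := by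
      rw [MulOpposite.smul_eq_mul_unop]
      simp [MulOpposite.op_mul]
    rw [this, mul_smul, hx, smul_zero]

/-- `M` is a nonsingular right `R`-module. -/
def IsNonsingular (M : Type v) [AddCommGroup M] [Module Rᵐᵒᵖ M] : Prop :=
  ∀ m : M, IsEssentialIn (rightAnnihilator R m) (⊤ : Submodule Rᵐᵒᵖ R) → m = 0

/-- `R` is a right V-ring: every simple right `R`-module is injective. -/
def IsRightVRing : Prop :=
  ∀ (N : Type u) [AddCommGroup N] [Module Rᵐᵒᵖ N],
    IsSimpleModule Rᵐᵒᵖ N → Module.Injective Rᵐᵒᵖ N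

/-- `R` is semiregular: `R/J(R)` is von Neumann regular and idempotents lift modulo `J(R)`. -/
def IsSemiregularRing : Prop :=
  (∀ a : R, ∃ b : R, a - a * b * a ∈ Ideal.jacobson (⊥ : Ideal R) ∧ b = b * a * b) ∧
  (∀ a : R, a * a - a ∈ Ideal.jacobson (⊥ : Ideal R) →
    ∃ e : R, e * e = e ∧ e - a ∈ Ideal.jacobson (⊥ : Ideal R))

end RingDefs

/-!
Write `A = e M` and `B = p M` with idempotents `e`, `p`. Since `A + B = A + (B + e B)` and
`B + e B` is `e`-stable, `A + B` is a summand once `B + e B` is. The automorphism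
`u = 1 + (1 - p) e p` satisfies `B + u B = B + e B`, and `u B` is both the image of the split
monomorphism `u|_B : B → M` and the kernel of the split epimorphism `M → M/B` induced by `u⁻¹`;
so (2) and (3) each imply (1). Conversely, images of split monomorphisms and kernels of split
epimorphisms are summands.
-/

open LinearMap Submodule

section DirectSummand

variable {S : Type*} [Ring S] {M : Type*} [AddCommGroup M] [Module S M]
  {N : Type*} [AddCommGroup N] [Module S N]

theorem IsDirectSummand.exists_isCompl {A : Submodule S M} (hA : IsDirectSummand A) :
    ∃ B : Submodule S M, IsCompl A B := by
  obtain ⟨B, hinf, hsup⟩ := hA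
  exact ⟨B, disjoint_iff.mpr hinf, codisjoint_iff.mpr hsup⟩

theorem IsDirectSummand.exists_isProj {A : Submodule S M} (hA : IsDirectSummand A) :
    ∃ p : M →ₗ[S] M, IsProj A p := by
  obtain ⟨B, hAB⟩ := hA.exists_isCompl
  exact ⟨A.projection B hAB, projection_apply_mem hAB, fun _ ↦ projection_apply_of_mem_left hAB⟩

theorem LinearMap.IsProj.isDirectSummand {A : Submodule S M} {p : M →ₗ[S] M} (hp : IsProj A p) :
    IsDirectSummand A :=
  ⟨ker p, hp.isCompl.inf_eq_bot, hp.isCompl.sup_eq_top⟩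

theorem isDirectSummand_range_of_comp_eq_id {f : N →ₗ[S] M} {g : M →ₗ[S] N}
    (hgf : g ∘ₗ f = LinearMap.id) : IsDirectSummand (range f) := by
  refine IsProj.isDirectSummand (p := f ∘ₗ g) ⟨fun x ↦ mem_range_self f (g x), ?_⟩
  rintro _ ⟨x, rfl⟩
  simp [← LinearMap.comp_apply g f, hgf]

theorem isDirectSummand_ker_of_comp_eq_id {f : M →ₗ[S] N} {g : N →ₗ[S] M}
    (hfg : f ∘ₗ g = LinearMap.id) : IsDirectSummand (ker f) := by
  have hfg' (y : N) : f (g y) = y := by simpa using LinearMap.congr_fun hfg y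
  refine IsProj.isDirectSummand (p := LinearMap.id - g ∘ₗ f) ⟨fun x ↦ ?_, fun x hx ↦ ?_⟩
  · simp [hfg']
  · simp [mem_ker.mp hx]

end DirectSummand

section SSP

variable {S : Type*} [Ring S] {M : Type*} [AddCommGroup M] [Module S M]

theorem isDirectSummand_sup_of_map_le {A C : Submodule S M} {e : M →ₗ[S] M} (he : IsProj A e)
    (hC : IsDirectSummand C) (hCe : C.map e ≤ C) : IsDirectSummand (A ⊔ C) := by
  obtain ⟨s, hs⟩ := hC.exists_isProj
  -- `e + s (1 - e)` is a projection onto `A ⊔ C`: it fixes `A`, and `C` because `(1 - e) C ≤ C`.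
  refine IsProj.isDirectSummand (p := e + s ∘ₗ (LinearMap.id - e)) ⟨fun x ↦ ?_, fun x hx ↦ ?_⟩
  · exact add_mem (mem_sup_left (he.map_mem x)) (mem_sup_right (hs.map_mem _))
  · suffices A ⊔ C ≤ eqLocus (e + s ∘ₗ (LinearMap.id - e)) LinearMap.id from this hx
    refine sup_le (fun a ha ↦ ?_) (fun c hc ↦ ?_)
    · simp [he.map_id a ha]
    · have hec : e c ∈ C := hCe (mem_map_of_mem hc)
      simp [hs.map_id _ (sub_mem hc hec)]

theorem isDirectSummand_sup_of_isDirectSummand_sup_map {A B : Submodule S M} {e : M →ₗ[S] M}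
    (he : IsProj A e) (h : IsDirectSummand (B ⊔ B.map e)) : IsDirectSummand (A ⊔ B) := by
  have hmap : (B ⊔ B.map e).map e ≤ B ⊔ B.map e := by
    rw [Submodule.map_sup, ← Submodule.map_comp, ← Module.End.mul_eq_comp, he.isIdempotentElem.eq]
    exact sup_le le_sup_right le_sup_right
  have hle : B.map e ≤ A := fun _ ⟨b, _, hb⟩ ↦ hb ▸ he.map_mem b
  have hsup : A ⊔ (B ⊔ B.map e) = A ⊔ B := by rw [sup_comm B, ← sup_assoc, sup_eq_left.mpr hle]
  exact hsup ▸ isDirectSummand_sup_of_map_le he h hmap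

theorem sup_map_eq_of_sub_mem {B : Submodule S M} {f g : M →ₗ[S] M}
    (hfg : ∀ b ∈ B, f b - g b ∈ B) : B ⊔ B.map f = B ⊔ B.map g := by
  have key {f g : M →ₗ[S] M} (hfg : ∀ b ∈ B, f b - g b ∈ B) : B ⊔ B.map f ≤ B ⊔ B.map g := by
    refine sup_le le_sup_left (map_le_iff_le_comap.mpr fun b hb ↦ ?_)
    rw [mem_comap, ← sub_add_cancel (f b) (g b)]
    exact add_mem (mem_sup_left (hfg b hb)) (mem_sup_right (mem_map_of_mem hb))
  exact le_antisymm (key hfg) (key fun b hb ↦ by simpa using B.neg_mem (hfg b hb))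

def oneAddEquivOfMulSelfEqZero (n : Module.End S M) (hn : n * n = 0) : M ≃ₗ[S] M :=
  .ofLinearMap (1 + n) (1 - n)
    (by rw [← Module.End.mul_eq_comp, mul_sub, mul_one, add_mul, one_mul, hn, add_zero,
      add_sub_cancel_right]; rfl)
    (by rw [← Module.End.mul_eq_comp, mul_add, mul_one, sub_mul, one_mul, hn, sub_zero,
      sub_add_cancel]; rfl)

theorem exists_linearEquiv_sup_map_eq {B : Submodule S M} {p : M →ₗ[S] M} (hp : IsProj B p)
    (e : M →ₗ[S] M) : ∃ u : M ≃ₗ[S] M, B ⊔ B.map (u : M →ₗ[S] M) = B ⊔ B.map e := by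
  -- `(1 + n) b ≡ e b` modulo `B` for `b ∈ B`, and `n² = 0` because `p (1 - p) = 0`.
  set n : Module.End S M := (1 - p) * e * p
  have hn : n * n = 0 := by
    have : p * (1 - p) = 0 := by rw [mul_sub, mul_one, hp.isIdempotentElem.eq, sub_self]
    simp only [n, mul_assoc, ← mul_assoc p (1 - p), this, zero_mul, mul_zero]
  refine ⟨oneAddEquivOfMulSelfEqZero n hn, sup_map_eq_of_sub_mem fun b hb ↦ ?_⟩
  change (1 + n) b - e b ∈ B
  have : (1 + n) b - e b = b - p (e b) := by simp [n, hp.map_id b hb]; abel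
  exact this ▸ sub_mem hb (hp.map_mem (e b))

theorem hasSSP_of_forall_isDirectSummand_sup_map_linearEquiv
    (H : ∀ B : Submodule S M, IsDirectSummand B → ∀ u : M ≃ₗ[S] M,
      IsDirectSummand (B ⊔ B.map (u : M →ₗ[S] M))) :
    HasSSP S M := by
  intro A B hA hB
  obtain ⟨e, he⟩ := hA.exists_isProj
  obtain ⟨p, hp⟩ := hB.exists_isProj
  obtain ⟨u, hu⟩ := exists_linearEquiv_sup_map_eq hp e
  exact isDirectSummand_sup_of_isDirectSummand_sup_map he (hu ▸ H B hB u)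

end SSP

section SplitMaps

variable {S : Type*} [Ring S] {M : Type*} [AddCommGroup M] [Module S M]

theorem exists_range_eq_map_linearEquiv {B : Submodule S M} (hB : IsDirectSummand B)
    (u : M ≃ₗ[S] M) : ∃ f : B →ₗ[S] M, (∃ g : M →ₗ[S] B, g ∘ₗ f = LinearMap.id) ∧
      range f = B.map (u : M →ₗ[S] M) := by
  obtain ⟨B', hBB'⟩ := hB.exists_isCompl
  refine ⟨u ∘ₗ B.subtype, ⟨B.projectionOnto B' hBB' ∘ₗ u.symm, ?_⟩, ?_⟩
  · ext x
    simp
  · rw [range_comp, range_subtype]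

theorem exists_ker_eq_map_linearEquiv {B : Submodule S M} (hB : IsDirectSummand B)
    (u : M ≃ₗ[S] M) : ∃ f : M →ₗ[S] M ⧸ B, (∃ g : M ⧸ B →ₗ[S] M, f ∘ₗ g = LinearMap.id) ∧
      ker f = B.map (u : M →ₗ[S] M) := by
  obtain ⟨B', hBB'⟩ := hB.exists_isCompl
  refine ⟨B.mkQ ∘ₗ u.symm,
    ⟨u ∘ₗ B'.subtype ∘ₗ (B.quotientEquivOfIsCompl B' hBB').toLinearMap, ?_⟩, ?_⟩
  · exact LinearMap.ext fun x ↦ by simp [-toLinearMap_quotientEquivOfIsCompl]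
  · rw [ker_comp, ker_mkQ, comap_equiv_eq_map_symm, LinearEquiv.symm_symm]

end SplitMaps

/-- characterizations of SSP modules via split monomorphisms and
split epimorphisms, for a right `R`-module `M` (realized as a left `Rᵐᵒᵖ`-module). -/
theorem statement_0 (R : Type u) [Ring R] (M : Type v) [AddCommGroup M] [Module Rᵐᵒᵖ M] :
    List.TFAE [
      HasSSP Rᵐᵒᵖ M,
      ∀ A : Submodule Rᵐᵒᵖ M, IsDirectSummand A →
        ∀ f : A →ₗ[Rᵐᵒᵖ] M, (∃ g : M →ₗ[Rᵐᵒᵖ] A, g ∘ₗ f = LinearMap.id) →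
          IsDirectSummand (A ⊔ LinearMap.range f),
      ∀ A : Submodule Rᵐᵒᵖ M, IsDirectSummand A →
        ∀ f : M →ₗ[Rᵐᵒᵖ] M ⧸ A, (∃ g : M ⧸ A →ₗ[Rᵐᵒᵖ] M, f ∘ₗ g = LinearMap.id) →
          IsDirectSummand (A ⊔ LinearMap.ker f)] := by
  tfae_have 1 → 2 := fun hSSP A hA f ⟨_, hgf⟩ ↦
    hSSP A _ hA (isDirectSummand_range_of_comp_eq_id hgf)
  tfae_have 1 → 3 := fun hSSP A hA f ⟨_, hfg⟩ ↦
    hSSP A _ hA (isDirectSummand_ker_of_comp_eq_id hfg)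
  tfae_have 2 → 1 := fun h ↦ hasSSP_of_forall_isDirectSummand_sup_map_linearEquiv fun B hB u ↦ by
    obtain ⟨f, hf, hrange⟩ := exists_range_eq_map_linearEquiv hB u
    exact hrange ▸ h B hB f hf
  tfae_have 3 → 1 := fun h ↦ hasSSP_of_forall_isDirectSummand_sup_map_linearEquiv fun B hB u ↦ by
    obtain ⟨f, hf, hker⟩ := exists_ker_eq_map_linearEquiv hB u
    exact hker ▸ h B hB f hf
  tfae_finish
end

section
/- Let M be a right R-module. Then M is an SIP module if and only if for any two direct summands A₁ and A₂ of M with A₁ ≅ A₂, the submodule A₁ ∩ A₂ is a direct summand of M. -/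
universe u v w

/-!
Let `e` and `f` be projections onto direct summands `A` and `B`. For any endomorphism `g`,
`t = (1 - e) g e` squares to zero, so `1 + t` is an automorphism; it carries `A` onto the graph
of `(1 - e) g : A → ker e`, which meets `A` in `{a ∈ A | g a ∈ A}`. This is therefore an
intersection of two isomorphic direct summands, and for `g = f` composing a projection onto it
with `f` gives a projection onto `A ⊓ B`.
-/

theorem IsIdempotentElem.isNilpotent_one_sub_mul_mul {R : Type*} [Ring R] {e : R}
    (he : IsIdempotentElem e) (g : R) : IsNilpotent ((1 - e) * g * e) := by
  have : e * (1 - e) = 0 := by rw [mul_sub, mul_one, he.eq, sub_self]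
  refine ⟨2, ?_⟩
  calc ((1 - e) * g * e) ^ 2 = (1 - e) * g * (e * (1 - e)) * g * e := by noncomm_ring
    _ = 0 := by rw [this, mul_zero, zero_mul, zero_mul]

section

open LinearMap

variable {S : Type u} [Ring S] {M : Type v} [AddCommGroup M] [Module S M]

theorem isDirectSummand_iff_exists_isCompl {A : Submodule S M} :
    IsDirectSummand A ↔ ∃ B, IsCompl A B := by
  simp only [IsDirectSummand, isCompl_iff, disjoint_iff, codisjoint_iff]

theorem isDirectSummand_iff_exists_isProj {A : Submodule S M} :
    IsDirectSummand A ↔ ∃ e : Module.End S M, IsProj A e := by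
  rw [isDirectSummand_iff_exists_isCompl]
  constructor
  · rintro ⟨B, hAB⟩
    exact ⟨A.projection B hAB, Submodule.projection_apply_mem hAB,
      fun x hx ↦ Submodule.projection_apply_left hAB ⟨x, hx⟩⟩
  · rintro ⟨e, he⟩
    exact ⟨_, he.isCompl⟩

theorem IsDirectSummand.map_of_bijective {A : Submodule S M} (hA : IsDirectSummand A)
    {U : Module.End S M} (hU : Function.Bijective U) : IsDirectSummand (A.map U) := by
  obtain ⟨B, hAB⟩ := isDirectSummand_iff_exists_isCompl.mp hA
  exact isDirectSummand_iff_exists_isCompl.mpr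
    ⟨_, (Submodule.orderIsoMapComapOfBijective U hU).isCompl hAB⟩

theorem LinearMap.IsProj.isDirectSummand_inf {A B : Submodule S M} {f : Module.End S M}
    (hf : IsProj B f) (hK : IsDirectSummand (A ⊓ A.comap f)) : IsDirectSummand (A ⊓ B) := by
  obtain ⟨p, hp⟩ := isDirectSummand_iff_exists_isProj.mp hK
  refine isDirectSummand_iff_exists_isProj.mpr ⟨f * p, fun x ↦ ?_, fun x hx ↦ ?_⟩
  · exact ⟨(hp.map_mem x).2, hf.map_mem (p x)⟩
  · have hfx : f x = x := hf.map_id x hx.2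
    have hxK : x ∈ A ⊓ A.comap f := ⟨hx.1, by simpa [Submodule.mem_comap, hfx] using hx.1⟩
    rw [Module.End.mul_apply, hp.map_id x hxK, hfx]

theorem LinearMap.IsProj.inf_map_one_add_eq_inf_comap {A : Submodule S M} {e : Module.End S M}
    (he : IsProj A e) (g : Module.End S M) :
    A ⊓ A.map (1 + (1 - e) * g * e) = A ⊓ A.comap g := by
  set t := (1 - e) * g * e
  have het : ∀ x, e (t x) = 0 := fun x ↦ by
    simp [t, he.map_id _ (he.map_mem _)]
  have ht : ∀ x ∈ A, t x = 0 ↔ g x ∈ A := fun x hx ↦ by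
    simp only [t, Module.End.mul_apply, he.map_id x hx, sub_apply, Module.End.one_apply,
      sub_eq_zero, he.mem_iff_map_id]
    exact eq_comm
  ext x
  simp only [Submodule.mem_inf, Submodule.mem_map, Submodule.mem_comap, and_congr_right_iff]
  intro hx
  rw [← ht x hx]
  constructor
  · rintro ⟨a, ha, rfl⟩
    have hfix : (1 + t) a = a := by
      rw [← he.map_id _ hx]
      simp [het, he.map_id a ha]
    have hta : t a = 0 := by simpa using hfix
    rw [hfix, hta]
  · intro htx
    exact ⟨x, hx, by simp [htx]⟩

theorem IsDirectSummand.inf_comap_of_isomorphic_inf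
    (h : ∀ A₁ A₂ : Submodule S M, IsDirectSummand A₁ → IsDirectSummand A₂ →
      Nonempty (A₁ ≃ₗ[S] A₂) → IsDirectSummand (A₁ ⊓ A₂))
    {A : Submodule S M} (hA : IsDirectSummand A) (g : Module.End S M) :
    IsDirectSummand (A ⊓ A.comap g) := by
  obtain ⟨e, he⟩ := isDirectSummand_iff_exists_isProj.mp hA
  have hU : Function.Bijective ⇑(1 + (1 - e) * g * e) :=
    (Module.End.isUnit_iff _).mp (he.isIdempotentElem.isNilpotent_one_sub_mul_mul g).isUnit_one_add
  rw [← he.inf_map_one_add_eq_inf_comap g]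
  exact h _ _ hA (hA.map_of_bijective hU) ⟨Submodule.equivMapOfInjective _ hU.injective A⟩

end

/-- `M` is SIP iff the intersection of any two isomorphic direct summands is a
direct summand. -/
theorem statement_3 (R : Type u) [Ring R] (M : Type v) [AddCommGroup M] [Module Rᵐᵒᵖ M] :
    HasSIP Rᵐᵒᵖ M ↔
      ∀ A₁ A₂ : Submodule Rᵐᵒᵖ M, IsDirectSummand A₁ → IsDirectSummand A₂ →
        Nonempty (A₁ ≃ₗ[Rᵐᵒᵖ] A₂) → IsDirectSummand (A₁ ⊓ A₂) := by
  refine ⟨fun h A₁ A₂ h₁ h₂ _ ↦ h A₁ A₂ h₁ h₂, fun h A B hA hB ↦ ?_⟩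
  obtain ⟨f, hf⟩ := isDirectSummand_iff_exists_isProj.mp hB
  exact hf.isDirectSummand_inf (hA.inf_comap_of_isomorphic_inf h f)
end

section
/- Let R be a ring, M an R-R-bimodule, and T = R ∝ M the trivial extension of R by M. Then T has the SSP as a right T-module if and only if (a) R has the SSP as a right R-module, and (b) for every x, y ∈ R with x = xyx, one has x·m·(1 − xy) = 0 for all m ∈ M. -/
universe u v w

section SSPAuxRIdl

open MulOpposite TrivSqZeroExt

variable {S : Type*} [Ring S]

/-- The principal right ideal `aS`. -/
def rIdl (a : S) : Submodule Sᵐᵒᵖ S := Submodule.span Sᵐᵒᵖ {a}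

lemma mem_rIdl {a x : S} : x ∈ rIdl a ↔ ∃ c : S, a * c = x := by
  rw [rIdl, Submodule.mem_span_singleton]
  constructor
  · rintro ⟨c, rfl⟩; exact ⟨c.unop, rfl⟩
  · rintro ⟨c, rfl⟩; exact ⟨op c, rfl⟩

lemma rIdl_le_iff {a : S} {P : Submodule Sᵐᵒᵖ S} : rIdl a ≤ P ↔ a ∈ P :=
  Submodule.span_singleton_le_iff_mem a P

lemma mem_rIdl_self (a : S) : a ∈ rIdl a := Submodule.mem_span_singleton_self a

lemma mul_mem_right' {P : Submodule Sᵐᵒᵖ S} {x : S} (r : S) (hx : x ∈ P) : x * r ∈ P :=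
  P.smul_mem (op r) hx

lemma rIdl_eq_rIdl {a b : S} (h1 : a ∈ rIdl b) (h2 : b ∈ rIdl a) : rIdl a = rIdl b :=
  le_antisymm (rIdl_le_iff.mpr h1) (rIdl_le_iff.mpr h2)

lemma idem_mul_of_mem {g x : S} (hg : g * g = g) (hx : x ∈ rIdl g) : g * x = x := by
  obtain ⟨c, rfl⟩ := mem_rIdl.mp hx
  rw [← mul_assoc, hg]

lemma idem_mul_compl {g b : S} (hg : g * g = g) : g * ((1 - g) * b) = 0 := by
  rw [← mul_assoc, mul_sub, mul_one, hg, sub_self, zero_mul]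

lemma isDirectSummand_iff_idem {A : Submodule Sᵐᵒᵖ S} :
    IsDirectSummand A ↔ ∃ e : S, e * e = e ∧ A = rIdl e := by
  constructor
  · rintro ⟨B, hib, hsb⟩
    have h1 : (1 : S) ∈ A ⊔ B := hsb ▸ Submodule.mem_top
    obtain ⟨a, ha, b, hb, hab⟩ := Submodule.mem_sup.mp h1
    have key : ∀ x ∈ A, a * x = x := by
      intro x hx
      have hx1 : a * x + b * x = x := by rw [← add_mul, hab, one_mul]
      have hmem : b * x ∈ A ⊓ B := by
        refine ⟨?_, mul_mem_right' x hb⟩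
        have hbx : b * x = x - a * x := eq_sub_of_add_eq' hx1
        rw [hbx]
        exact sub_mem hx (mul_mem_right' x ha)
      rw [hib, Submodule.mem_bot] at hmem
      rw [hmem, add_zero] at hx1
      exact hx1
    refine ⟨a, key a ha, le_antisymm ?_ (rIdl_le_iff.mpr ha)⟩
    intro x hx
    exact mem_rIdl.mpr ⟨x, key x hx⟩
  · rintro ⟨e, he, rfl⟩
    refine ⟨rIdl (1 - e), ?_, ?_⟩
    · rw [eq_bot_iff]
      rintro x ⟨hx1, hx2⟩
      have hex : e * x = x := idem_mul_of_mem he hx1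
      obtain ⟨d, rfl⟩ := mem_rIdl.mp hx2
      rw [Submodule.mem_bot, ← hex, idem_mul_compl he]
    · rw [eq_top_iff]
      intro x _
      refine Submodule.mem_sup.mpr ⟨e * x, mem_rIdl.mpr ⟨x, rfl⟩,
        (1 - e) * x, mem_rIdl.mpr ⟨x, rfl⟩, ?_⟩
      rw [← add_mul]
      simp

lemma sup_rIdl_w (e f : S) : rIdl e ⊔ rIdl ((1 - e) * f) = rIdl e ⊔ rIdl f := by
  have hef : e * f ∈ rIdl e ⊔ rIdl f := Submodule.mem_sup_left (mem_rIdl.mpr ⟨f, rfl⟩)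
  have hef' : e * f ∈ rIdl e ⊔ rIdl ((1 - e) * f) :=
    Submodule.mem_sup_left (mem_rIdl.mpr ⟨f, rfl⟩)
  apply le_antisymm
  · refine sup_le le_sup_left (rIdl_le_iff.mpr ?_)
    have : (1 - e) * f = f - e * f := by rw [sub_mul, one_mul]
    rw [this]
    exact sub_mem (Submodule.mem_sup_right (mem_rIdl_self f)) hef
  · refine sup_le le_sup_left (rIdl_le_iff.mpr ?_)
    have hfe : f = e * f + (1 - e) * f := by rw [← add_mul]; simp
    have hmem := add_mem hef' (Submodule.mem_sup_right (mem_rIdl_self ((1 - e) * f)))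
    rwa [← hfe] at hmem


lemma ssp_w (hS : HasSSP Sᵐᵒᵖ S) {e f : S} (he : e * e = e) (hf : f * f = f) :
    ∃ h : S, h * h = h ∧ rIdl ((1 - e) * f) = rIdl h := by
  obtain ⟨g, hg, hgeq⟩ := isDirectSummand_iff_idem.mp
    (hS _ _ (isDirectSummand_iff_idem.mpr ⟨e, he, rfl⟩)
      (isDirectSummand_iff_idem.mpr ⟨f, hf, rfl⟩))
  have hew : ∀ c : S, e * ((1 - e) * f * c) = 0 := by
    intro c
    rw [mul_assoc (1 - e) f c, idem_mul_compl he]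
  have hsupw : rIdl e ⊔ rIdl ((1 - e) * f) = rIdl g := by rw [sup_rIdl_w, hgeq]
  have hwg : (1 - e) * f ∈ rIdl g := hsupw ▸ Submodule.mem_sup_right (mem_rIdl_self _)
  have heg : e ∈ rIdl g := hsupw ▸ Submodule.mem_sup_left (mem_rIdl_self e)
  apply isDirectSummand_iff_idem.mp
  refine ⟨rIdl e ⊔ rIdl (1 - g), ?_, ?_⟩
  · rw [eq_bot_iff]
    rintro ξ ⟨h1, h2⟩
    obtain ⟨c, rfl⟩ := mem_rIdl.mp h1
    obtain ⟨a, ha, η, hη, hsum⟩ := Submodule.mem_sup.mp h2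
    obtain ⟨a', rfl⟩ := mem_rIdl.mp ha
    obtain ⟨b', rfl⟩ := mem_rIdl.mp hη
    have hgw : g * ((1 - e) * f * c) = (1 - e) * f * c :=
      idem_mul_of_mem hg (mul_mem_right' c hwg)
    have hge : g * (e * a') = e * a' := idem_mul_of_mem hg (mul_mem_right' a' heg)
    have hsum' := congrArg (g * ·) hsum
    simp only [mul_add, hge, idem_mul_compl hg, add_zero, hgw] at hsum'
    -- hsum' : e * a' = (1 - e) * f * c
    have he2 : e * (e * a') = e * a' := by rw [← mul_assoc, he]
    rw [Submodule.mem_bot, ← hsum', ← he2, hsum', hew c]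
  · rw [eq_top_iff]
    intro ξ _
    have hra : rIdl ((1 - e) * f) ⊔ (rIdl e ⊔ rIdl (1 - g)) =
        (rIdl e ⊔ rIdl ((1 - e) * f)) ⊔ rIdl (1 - g) := by
      rw [← sup_assoc, sup_comm (rIdl ((1 - e) * f)) (rIdl e)]
    rw [hra, hsupw]
    refine Submodule.mem_sup.mpr ⟨g * ξ, mem_rIdl.mpr ⟨ξ, rfl⟩,
      (1 - g) * ξ, mem_rIdl.mpr ⟨ξ, rfl⟩, ?_⟩
    rw [← add_mul]
    simp

lemma ssp_of_w'
    (H : ∀ e f : S, e * e = e → f * f = f → ∃ h, h * h = h ∧ rIdl ((1 - e) * f) = rIdl h) :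
    HasSSP Sᵐᵒᵖ S := by
  intro A B hA hB
  obtain ⟨e, he, rfl⟩ := isDirectSummand_iff_idem.mp hA
  obtain ⟨f, hf, rfl⟩ := isDirectSummand_iff_idem.mp hB
  obtain ⟨h, hh, hwh⟩ := H e f he hf
  have heh : e * h = 0 := by
    obtain ⟨c, hc⟩ := mem_rIdl.mp (hwh ▸ mem_rIdl_self h)
    rw [← hc, mul_assoc (1 - e) f c, idem_mul_compl he]
  have hek : e * (e + h - h * e) = e := by
    rw [mul_sub, mul_add, he, heh, add_zero, ← mul_assoc, heh, zero_mul, sub_zero]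
  have hhk : h * (e + h - h * e) = h := by
    rw [mul_sub, mul_add, hh, ← mul_assoc, hh]
    abel
  have hhek : (h * e) * (e + h - h * e) = h * e := by
    rw [mul_assoc, hek]
  have hke : (e + h - h * e) * e = e := by
    rw [sub_mul, add_mul, he, mul_assoc, he]
    abel
  have hkh : (e + h - h * e) * h = h := by
    rw [sub_mul, add_mul, heh, hh, mul_assoc, heh, mul_zero, sub_zero, zero_add]
  have hkk : (e + h - h * e) * (e + h - h * e) = e + h - h * e := by
    rw [sub_mul, add_mul, hek, hhk, hhek]
  refine isDirectSummand_iff_idem.mpr ⟨e + h - h * e, hkk, ?_⟩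
  rw [← sup_rIdl_w e f, hwh]
  apply le_antisymm
  · exact sup_le (rIdl_le_iff.mpr (mem_rIdl.mpr ⟨e, hke⟩))
      (rIdl_le_iff.mpr (mem_rIdl.mpr ⟨h, hkh⟩))
  · rw [rIdl_le_iff]
    exact sub_mem (add_mem (Submodule.mem_sup_left (mem_rIdl_self e))
      (Submodule.mem_sup_right (mem_rIdl_self h)))
      (Submodule.mem_sup_right (mul_mem_right' e (mem_rIdl_self h)))

end SSPAuxRIdl

section SSPAuxT

open MulOpposite TrivSqZeroExt

variable {R : Type*} [Ring R] {M : Type*} [AddCommGroup M]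
    [Module R M] [Module Rᵐᵒᵖ M] [SMulCommClass R Rᵐᵒᵖ M]

lemma idem_compl_idem {e : R} (he : e * e = e) : (1 - e) * (1 - e) = 1 - e := by
  rw [mul_sub, mul_one, sub_mul, one_mul, he, sub_self, sub_zero]

lemma idem_mul_compl2 {e : R} (he : e * e = e) : e * (1 - e) = 0 := by
  rw [mul_sub, mul_one, he, sub_self]

lemma compl_mul_idem {e : R} (he : e * e = e) : (1 - e) * e = 0 := by
  rw [sub_mul, one_mul, he, sub_self]

lemma key_b (hT : HasSSP (TrivSqZeroExt R M)ᵐᵒᵖ (TrivSqZeroExt R M)) {e : R} (he : e * e = e) (μ : M) :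
    op (1 - e) • (e • μ) = 0 := by
  set d := op (1 - e) • (e • μ) with hd
  have hed : e • d = d := by
    rw [hd, smul_comm, ← mul_smul, he]
  have hopd : ∀ a : R, op a • d = op ((1 - e) * a) • (e • μ) := by
    intro a
    rw [hd, ← mul_smul, ← op_mul]
  have h1d : op (1 - e) • d = d := by
    rw [hopd, idem_compl_idem he]
  have hE : (inl (1 - e) : TrivSqZeroExt R M) * inl (1 - e) = inl (1 - e) := by
    rw [inl_mul_inl, idem_compl_idem he]
  have hFF : ((inl (1 - e) + inr d : TrivSqZeroExt R M)) * (inl (1 - e) + inr d)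
      = inl (1 - e) + inr d := by
    have hFf : (inl (1 - e) + inr d : TrivSqZeroExt R M).fst = 1 - e := by
      rw [fst_add, fst_inl, fst_inr, add_zero]
    have hFs : (inl (1 - e) + inr d : TrivSqZeroExt R M).snd = d := by
      rw [snd_add, snd_inl, snd_inr, zero_add]
    apply TrivSqZeroExt.ext
    · rw [fst_mul, hFf, idem_compl_idem he]
    · rw [snd_mul, hFf, hFs]
      show (1 - e) • d + op (1 - e) • d = d
      rw [h1d, sub_smul, one_smul, hed, sub_self, zero_add]
  obtain ⟨h, hh, hwh⟩ := ssp_w hT hE hFF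
  have hw : (1 - inl (1 - e) : TrivSqZeroExt R M) * (inl (1 - e) + inr d) = inr d := by
    apply TrivSqZeroExt.ext
    · rw [fst_mul, fst_sub, fst_one, fst_inl, fst_add, fst_inl, fst_inr, add_zero,
        sub_sub_cancel, idem_mul_compl2 he]
    · rw [snd_mul, fst_sub, fst_one, fst_inl, snd_sub, snd_one, snd_inl, sub_zero,
        snd_add, snd_inl, snd_inr, zero_add, fst_add, fst_inl, fst_inr, add_zero,
        sub_sub_cancel, smul_zero, add_zero, hed]
  rw [hw] at hwh
  have hh0 : h.fst = 0 := by
    obtain ⟨c, hc⟩ := mem_rIdl.mp (hwh.ge (mem_rIdl_self h))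
    have h2 := congrArg TrivSqZeroExt.fst hc
    rw [fst_mul, fst_inr, zero_mul] at h2
    exact h2.symm
  have hhs : h.snd = 0 := by
    have h2 := congrArg TrivSqZeroExt.snd hh
    rw [snd_mul, hh0] at h2
    show h.snd = 0
    rw [← h2]
    show (0 : R) • h.snd + op (0 : R) • h.snd = 0
    rw [zero_smul, op_zero, zero_smul, add_zero]
  have hhzero : h = 0 := TrivSqZeroExt.ext (by rw [hh0, fst_zero]) (by rw [hhs, snd_zero])
  rw [hhzero] at hwh
  obtain ⟨c, hc⟩ := mem_rIdl.mp (hwh.le (mem_rIdl_self _))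
  rw [zero_mul] at hc
  have h2 := congrArg TrivSqZeroExt.snd hc
  rw [snd_zero, snd_inr] at h2
  exact h2.symm

lemma key_a (hT : HasSSP (TrivSqZeroExt R M)ᵐᵒᵖ (TrivSqZeroExt R M)) : HasSSP Rᵐᵒᵖ R := by
  intro A B hA hB
  obtain ⟨e, he, rfl⟩ := isDirectSummand_iff_idem.mp hA
  obtain ⟨f, hf, rfl⟩ := isDirectSummand_iff_idem.mp hB
  have hTe : (inl e : TrivSqZeroExt R M) * inl e = inl e := by rw [inl_mul_inl, he]
  have hTf : (inl f : TrivSqZeroExt R M) * inl f = inl f := by rw [inl_mul_inl, hf]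
  obtain ⟨G, hG, hGeq⟩ := isDirectSummand_iff_idem.mp
    (hT _ _ (isDirectSummand_iff_idem.mpr ⟨inl e, hTe, rfl⟩)
      (isDirectSummand_iff_idem.mpr ⟨inl f, hTf, rfl⟩))
  have hgg : G.fst * G.fst = G.fst := by
    have h2 := congrArg TrivSqZeroExt.fst hG; rwa [fst_mul] at h2
  refine isDirectSummand_iff_idem.mpr ⟨G.fst, hgg, le_antisymm ?_ ?_⟩
  · refine sup_le (rIdl_le_iff.mpr ?_) (rIdl_le_iff.mpr ?_)
    · obtain ⟨c, hc⟩ := mem_rIdl.mp (hGeq.le (Submodule.mem_sup_left (mem_rIdl_self (inl e))))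
      refine mem_rIdl.mpr ⟨c.fst, ?_⟩
      have h2 := congrArg TrivSqZeroExt.fst hc; rwa [fst_mul, fst_inl] at h2
    · obtain ⟨c, hc⟩ := mem_rIdl.mp (hGeq.le (Submodule.mem_sup_right (mem_rIdl_self (inl f))))
      refine mem_rIdl.mpr ⟨c.fst, ?_⟩
      have h2 := congrArg TrivSqZeroExt.fst hc; rwa [fst_mul, fst_inl] at h2
  · rw [rIdl_le_iff]
    obtain ⟨a, ha, b, hb, hab⟩ := Submodule.mem_sup.mp (hGeq.ge (mem_rIdl_self G))
    obtain ⟨c1, hc1⟩ := mem_rIdl.mp ha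
    obtain ⟨c2, hc2⟩ := mem_rIdl.mp hb
    refine Submodule.mem_sup.mpr ⟨e * c1.fst, mem_rIdl.mpr ⟨c1.fst, rfl⟩,
      f * c2.fst, mem_rIdl.mpr ⟨c2.fst, rfl⟩, ?_⟩
    have h2 := congrArg TrivSqZeroExt.fst hab
    rw [← hc1, ← hc2, fst_add, fst_mul, fst_mul, fst_inl, fst_inl] at h2
    exact h2

lemma key_back (hR : HasSSP Rᵐᵒᵖ R)
    (hb : ∀ x y : R, x = x * y * x → ∀ m : M, op (1 - x * y) • (x • m) = 0)
    {E F : TrivSqZeroExt R M} (hE : E * E = E) (hF : F * F = F) :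
    ∃ H : TrivSqZeroExt R M, H * H = H ∧ rIdl ((1 - E) * F) = rIdl H := by
  have hU : (1 - E) * (1 - E) = 1 - E := by
    rw [mul_sub, mul_one, sub_mul, one_mul, hE, sub_self, sub_zero]
  set u : R := (1 - E).fst with hu_def
  set m : M := (1 - E).snd with hm_def
  set v : R := F.fst with hv_def
  set n : M := F.snd with hn_def
  have hu : u * u = u := by
    have h2 := congrArg TrivSqZeroExt.fst hU; rwa [fst_mul] at h2
  have hv : v * v = v := by
    have h2 := congrArg TrivSqZeroExt.fst hF; rwa [fst_mul] at h2
  set p : M := ((1 - E) * F).snd with hp_def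
  have hp : p = u • n + op v • m := by rw [hp_def, snd_mul]
  -- the two structural relations
  have hup : u • p + op (u * v) • m = p := by
    have hUW : (1 - E) * ((1 - E) * F) = (1 - E) * F := by rw [← mul_assoc, hU]
    have h2 := congrArg TrivSqZeroExt.snd hUW
    rwa [snd_mul ((1-E)) ((1-E)*F), fst_mul] at h2
  have hpv : (u * v) • n + op v • p = p := by
    have hWF : ((1 - E) * F) * F = (1 - E) * F := by rw [mul_assoc, hF]
    have h2 := congrArg TrivSqZeroExt.snd hWF
    rwa [snd_mul ((1-E)*F) F, fst_mul] at h2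
  -- the ring-theoretic data from SSP of R
  obtain ⟨g, hg, hxg⟩ := ssp_w hR (idem_compl_idem hu) hv
  rw [sub_sub_cancel] at hxg
  obtain ⟨t₀, ht₀⟩ := mem_rIdl.mp (hxg.ge (mem_rIdl_self g))
  obtain ⟨c₀, hc₀⟩ := mem_rIdl.mp (hxg.le (mem_rIdl_self (u * v)))
  have hgx : g * (u * v) = u * v := by rw [← hc₀, ← mul_assoc, hg]
  set t : R := t₀ * g with ht_def
  have hxt : (u * v) * t = g := by rw [ht_def, ← mul_assoc, ht₀, hg]
  have htg : t * g = t := by rw [ht_def, mul_assoc, hg]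
  have h5 : u * (u * v) = u * v := by rw [← mul_assoc, hu]
  have hug : u * g = g := by
    rw [← hxt, ← mul_assoc u (u * v) t, h5]
  set z : R := (1 - g) * u with hz_def
  have hzz : z * z = z := by
    have h6 : u * ((1 - g) * u) = (u - g) * u := by rw [← mul_assoc, mul_sub, mul_one, hug]
    have h7 : (u - g) * u = u - g * u := by rw [sub_mul, hu]
    have hcg : ((1 : R) - g) * g = 0 := by rw [sub_mul, one_mul, hg, sub_self]
    have h8 : (1 - g) * (u - g * u) = (1 - g) * u := by
      rw [mul_sub ((1 : R) - g) u (g * u), ← mul_assoc, hcg, zero_mul, sub_zero]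
    rw [hz_def, mul_assoc ((1 : R) - g) u ((1 - g) * u), h6, h7, h8]
  have hzx : z * (u * v) = 0 := by
    rw [hz_def, mul_assoc ((1 : R) - g) u (u * v), h5, sub_mul, one_mul, hgx, sub_self]
  have hxs : (u * v) * (1 - t * (u * v)) = 0 := by
    rw [mul_sub, mul_one, ← mul_assoc, hxt, hgx, sub_self]
  have hzs : z * (v * (1 - t * (u * v))) = 0 := by
    rw [hz_def, mul_assoc ((1 : R) - g) u (v * (1 - t * (u * v))),
      ← mul_assoc u v (1 - t * (u * v)), hxs, mul_zero]
  -- the idempotent of T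
  set q : M := op t • ((1 - g) • p) with hq_def
  have hsplit : ∀ (s : R) (ν : M), op (1 - s) • ν = ν - op s • ν := by
    intro s ν; rw [op_sub, op_one, sub_smul, one_smul]
  have hzid : ∀ ν : M, z • ν = op z • (z • ν) := by
    intro ν
    have h2 := hb z 1 (by rw [mul_one, hzz]) ν
    rw [mul_one, hsplit, sub_eq_zero] at h2
    exact h2
  -- D = 0
  have hD : op (1 - t * (u * v)) • ((1 - g) • p) = 0 := by
    have stepA : (1 - g) • p = z • p + op (u * v) • ((1 - g) • m) := by
      conv_lhs => rw [← hup]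
      rw [smul_add, ← mul_smul ((1 : R) - g) u p, ← hz_def,
        smul_comm ((1 : R) - g) (op (u * v)) m]
    have stepB : z • p = op v • (z • p) := by
      nth_rewrite 1 [← hpv]
      rw [smul_add, ← mul_smul z (u * v) n, hzx, zero_smul, zero_add,
        smul_comm z (op v) p]
    rw [stepA, smul_add]
    have h2nd : op (1 - t * (u * v)) • (op (u * v) • ((1 - g) • m)) = 0 := by
      rw [← mul_smul, ← op_mul, hxs, op_zero, zero_smul]
    rw [h2nd, add_zero, stepB, ← mul_smul, ← op_mul, hzid, ← mul_smul, ← op_mul, hzs,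
      op_zero, zero_smul]
  refine ⟨inl g + inr q, ?_, ?_⟩
  · apply TrivSqZeroExt.ext
    · rw [fst_mul, fst_add, fst_inl, fst_inr, add_zero, hg]
    · rw [snd_mul, fst_add, fst_inl, fst_inr, add_zero, snd_add, snd_inl, snd_inr, zero_add]
      show g • q + op g • q = q
      have hgq : g • q = 0 := by
        rw [hq_def, smul_comm, ← mul_smul, idem_mul_compl2 hg, zero_smul, smul_zero]
      have hogq : op g • q = q := by
        rw [hq_def, ← mul_smul, ← op_mul, htg]
      rw [hgq, hogq, zero_add]
  · apply rIdl_eq_rIdl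
    · -- (1-E)*F ∈ rIdl (inl g + inr q)
      refine mem_rIdl.mpr ⟨inl (u * v) + inr p, ?_⟩
      apply TrivSqZeroExt.ext
      · rw [fst_mul, fst_add, fst_inl, fst_inr, add_zero, fst_add, fst_inl, fst_inr, add_zero,
          fst_mul, hgx]
      · rw [snd_mul, fst_add, fst_inl, fst_inr, add_zero, snd_add, snd_inl, snd_inr, zero_add,
          fst_add, fst_inl, fst_inr, add_zero, snd_add, snd_inl, snd_inr, zero_add]
        show g • p + op (u * v) • q = p
        have h3 : op (u * v) • q = (1 - g) • p := by
          rw [hq_def, ← mul_smul, ← op_mul]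
          have h4 := hsplit (t * (u * v)) ((1 - g) • p)
          rw [hD, eq_comm, sub_eq_zero] at h4
          exact h4.symm
        rw [h3, sub_smul, one_smul, add_sub_cancel]
    · -- inl g + inr q ∈ rIdl ((1-E)*F)
      refine mem_rIdl.mpr ⟨inl t + inr (-(op t • (t • p))), ?_⟩
      apply TrivSqZeroExt.ext
      · rw [fst_mul, fst_add, fst_inl, fst_inr, add_zero, fst_mul, fst_add, fst_inl, fst_inr,
          add_zero, hxt]
      · rw [snd_mul, fst_mul, snd_add, snd_inl, snd_inr, zero_add, fst_add, fst_inl, fst_inr,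
          add_zero, snd_add, snd_inl, snd_inr, zero_add]
        show (u * v) • (-(op t • (t • p))) + op t • p = q
        rw [smul_neg, smul_comm, ← mul_smul, hxt, hq_def, sub_smul, one_smul, smul_sub]
        abel

end SSPAuxT

/-- the trivial extension `T = R ∝ M` has the SSP (as a right `T`-module) iff
`R` has the SSP (as a right `R`-module) and `x·m·(1 - xy) = 0` whenever `x = xyx`. -/
theorem statement_4 (R : Type u) [Ring R] (M : Type u) [AddCommGroup M]
    [Module R M] [Module Rᵐᵒᵖ M] [SMulCommClass R Rᵐᵒᵖ M] :
    HasSSP (TrivSqZeroExt R M)ᵐᵒᵖ (TrivSqZeroExt R M) ↔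
      (HasSSP Rᵐᵒᵖ R ∧
        ∀ x y : R, x = x * y * x → ∀ m : M,
          MulOpposite.op (1 - x * y) • (x • m) = 0) := by
  constructor
  · intro hT
    refine ⟨key_a hT, ?_⟩
    intro x y hxyx m
    have he : (x * y) * (x * y) = x * y := by rw [← mul_assoc, ← hxyx]
    have hkey := key_b hT he (x • m)
    rwa [← mul_smul (x * y) x m, ← hxyx] at hkey
  · rintro ⟨hR, hb⟩
    apply ssp_of_w'
    intro E F hE hF
    exact key_back hR hb hE hF
end

section
/- Let R be a ring. The following are equivalent: (1) R is a semisimple artinian ring; (2) R is SIP as a right R-module and every right R-module has a SIP-cover; (3) R is SIP as a right R-module and every 2-generated right R-module has a SIP-cover; (4) R is SIP as a right R-module and every right R-module has a SIP-envelope; (5) R is SIP as a right R-module and every 2-generated right R-module has a SIP-envelope. -/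
universe u v w

/-!
Over a semisimple ring every module is semisimple, hence SIP, and is its own SIP-cover and
SIP-envelope. Conversely, if `M` and `N` are SIP, the inclusions of `M` and `N` into `M × N` factor
through any SIP-cover of `M × N` (dually, the projections through any SIP-envelope), which forces
the cover (envelope) map to be an isomorphism; so `R × R/m` is SIP for every maximal right ideal
`m`, and `R × R/m` is 2-generated. There the summands `R × 0` and the graph of `R → R/m` meet in
`m × 0`, so `m` is a direct summand of `R_R`. A ring whose maximal right ideals are all direct
summands is semisimple: a maximal right ideal containing the socle would have a simple complement.
-/

section DirectSummands

variable {S : Type u} [Ring S] {M : Type v} {N : Type w} [AddCommGroup M] [Module S M]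
  [AddCommGroup N] [Module S N]

theorem isDirectSummand_iff_isComplemented {A : Submodule S M} :
    IsDirectSummand A ↔ IsComplemented A :=
  ⟨fun ⟨B, hinf, hsup⟩ => ⟨B, disjoint_iff.mpr hinf, codisjoint_iff.mpr hsup⟩,
    fun ⟨B, hB⟩ => ⟨B, hB.inf_eq_bot, hB.sup_eq_top⟩⟩

theorem IsDirectSummand.map_orderIso (f : Submodule S M ≃o Submodule S N) {A : Submodule S M}
    (h : IsDirectSummand A) : IsDirectSummand (f A) := by
  obtain ⟨B, hB⟩ := isDirectSummand_iff_isComplemented.mp h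
  exact isDirectSummand_iff_isComplemented.mpr ⟨f B, f.isCompl hB⟩

theorem HasSIP.of_isSemisimpleModule [IsSemisimpleModule S M] : HasSIP S M :=
  fun A B _ _ => isDirectSummand_iff_isComplemented.mpr (exists_isCompl (A ⊓ B))

theorem HasSIP.congr (e : M ≃ₗ[S] N) (h : HasSIP S N) : HasSIP S M := by
  intro A B hA hB
  let f := Submodule.orderIsoMapComap e
  have := (h _ _ (hA.map_orderIso f) (hB.map_orderIso f)).map_orderIso f.symm
  rwa [← f.map_inf, f.symm_apply_apply] at this

end DirectSummands

section Products

open LinearMap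

variable {S : Type u} [Ring S] {M : Type v} {N : Type w} [AddCommGroup M] [Module S M]
  [AddCommGroup N] [Module S N]

theorem isCompl_graph_range_inr (f : M →ₗ[S] N) : IsCompl f.graph (range (inr S M N)) := by
  constructor
  · rw [Submodule.disjoint_def]
    rintro x hx ⟨y, rfl⟩
    simp_all [mem_graph_iff]
  · rw [codisjoint_iff_le_sup]
    rintro x -
    exact Submodule.mem_sup.mpr ⟨(x.1, f x.1), by simp [mem_graph_iff], (0, x.2 - f x.1),
      ⟨_, rfl⟩, by ext <;> simp⟩

theorem range_inl_inf_graph (f : M →ₗ[S] N) :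
    range (inl S M N) ⊓ f.graph = (ker f).map (inl S M N) := by
  ext ⟨x, y⟩
  simp only [Submodule.mem_inf, range_inl, mem_ker, snd_apply, mem_graph_iff,
    Submodule.map_inl, Submodule.mem_prod, Submodule.mem_bot]
  constructor
  · rintro ⟨rfl, h⟩; exact ⟨h.symm, rfl⟩
  · rintro ⟨h, rfl⟩; exact ⟨rfl, h.symm⟩

theorem IsDirectSummand.of_map_inl {p : Submodule S M}
    (h : IsDirectSummand (p.map (inl S M N))) : IsDirectSummand p := by
  obtain ⟨D, hinf, hsup⟩ := h
  refine ⟨D.comap (inl S M N), ?_, ?_⟩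
  · rw [eq_bot_iff]
    rintro x ⟨hxp, hxD⟩
    have : inl S M N x ∈ p.map (inl S M N) ⊓ D := ⟨Submodule.mem_map_of_mem hxp, hxD⟩
    rw [hinf, Submodule.mem_bot] at this
    exact congrArg Prod.fst this
  · rw [eq_top_iff]
    rintro x -
    -- modular law, since `p.map inl ≤ range inl`
    have hx : inl S M N x ∈ p.map (inl S M N) ⊔ (D ⊓ range (inl S M N)) := by
      rw [← sup_inf_assoc_of_le D (LinearMap.map_le_range), hsup, top_inf_eq]
      exact mem_range_self _ x
    obtain ⟨_, ⟨u, hu, rfl⟩, _, ⟨hvD, v, rfl⟩, huv⟩ := Submodule.mem_sup.mp hx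
    refine Submodule.mem_sup.mpr ⟨u, hu, v, hvD, ?_⟩
    simpa using congrArg Prod.fst huv

theorem HasSIP.isDirectSummand_ker_of_prod (f : M →ₗ[S] N) (h : HasSIP S (M × N)) :
    IsDirectSummand (ker f) := by
  apply IsDirectSummand.of_map_inl (N := N)
  rw [← range_inl_inf_graph]
  exact h _ _ (isDirectSummand_iff_isComplemented.mpr ⟨_, isCompl_range_inl_inr⟩)
    (isDirectSummand_iff_isComplemented.mpr ⟨_, isCompl_graph_range_inr f⟩)

theorem TwoGenerated.prod {x : M} {y : N} (hx : Submodule.span S {x} = ⊤)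
    (hy : Submodule.span S {y} = ⊤) : TwoGenerated S (M × N) := by
  refine ⟨(x, 0), (0, y), ?_⟩
  rw [Set.insert_eq, Submodule.span_union,
    show ({(x, 0)} : Set (M × N)) = inl S M N '' {x} by simp,
    show ({(0, y)} : Set (M × N)) = inr S M N '' {y} by simp,
    Submodule.span_image, Submodule.span_image, hx, hy, Submodule.map_top, Submodule.map_top,
    sup_range_inl_inr]

end Products

section CoversAndEnvelopes

open LinearMap

variable {S : Type u} [Ring S] {P : ModuleCat.{v} S → Prop}

theorem hasCover_of_mem {M : Type v} [AddCommGroup M] [Module S M]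
    (hM : P (ModuleCat.of S M)) : HasCover S P M := by
  refine ⟨ModuleCat.of S M, LinearMap.id, hM, fun _ _ g' => ⟨g', g'.id_comp⟩, ?_⟩
  intro h hh
  rw [id_comp] at hh
  exact hh ▸ Function.bijective_id

theorem hasEnvelope_of_mem {M : Type v} [AddCommGroup M] [Module S M]
    (hM : P (ModuleCat.of S M)) : HasEnvelope S P M := by
  refine ⟨ModuleCat.of S M, LinearMap.id, hM, fun _ _ g' => ⟨g', g'.comp_id⟩, ?_⟩
  intro h hh
  rw [comp_id] at hh
  exact hh ▸ Function.bijective_id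

variable {M N : Type v} [AddCommGroup M] [Module S M] [AddCommGroup N] [Module S N]

theorem HasCover.exists_linearEquiv_prod (hM : P (ModuleCat.of S M))
    (hN : P (ModuleCat.of S N)) (h : HasCover S P (M × N)) :
    ∃ E : ModuleCat.{v} S, P E ∧ Nonempty (E ≃ₗ[S] M × N) := by
  obtain ⟨E, g, hE, hlift, hmin⟩ := h
  obtain ⟨s, hs⟩ := hlift _ hM (inl S M N)
  obtain ⟨t, ht⟩ := hlift _ hN (inr S M N)
  have hσ : g ∘ₗ s.coprod t = LinearMap.id := by
    rw [comp_coprod, hs, ht, coprod_inl_inr]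
  have hbij : Function.Bijective (s.coprod t ∘ₗ g) :=
    hmin _ (by rw [← comp_assoc, hσ, id_comp])
  refine ⟨E, hE, ⟨LinearEquiv.ofBijective g ⟨fun x y hxy => hbij.injective ?_, fun z =>
    ⟨s.coprod t z, congr($hσ z)⟩⟩⟩⟩
  simp only [comp_apply, hxy]

theorem HasEnvelope.exists_linearEquiv_prod (hM : P (ModuleCat.of S M))
    (hN : P (ModuleCat.of S N)) (h : HasEnvelope S P (M × N)) :
    ∃ E : ModuleCat.{v} S, P E ∧ Nonempty (E ≃ₗ[S] M × N) := by
  obtain ⟨E, u, hE, hext, hmin⟩ := h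
  obtain ⟨p, hp⟩ := hext _ hM (fst S M N)
  obtain ⟨q, hq⟩ := hext _ hN (snd S M N)
  have hρ : p.prod q ∘ₗ u = LinearMap.id := by
    rw [prod_comp, hp, hq, pair_fst_snd]
  have hbij : Function.Bijective (u ∘ₗ p.prod q) :=
    hmin _ (by rw [comp_assoc, hρ, comp_id])
  have hinj : Function.Injective u := fun x y hxy => by
    simpa [← comp_apply (g := u), hρ] using congr(p.prod q $hxy)
  have hsurj : Function.Surjective u := fun z =>
    let ⟨y, hy⟩ := hbij.surjective z
    ⟨p.prod q y, hy⟩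
  exact ⟨E, hE, ⟨(LinearEquiv.ofBijective u ⟨hinj, hsurj⟩).symm⟩⟩

end CoversAndEnvelopes

section Semisimplicity

theorem sSup_atoms_eq_top_of_isCoatom_isComplemented {α : Type*} [CompleteLattice α]
    [IsModularLattice α] [IsCoatomic α] (h : ∀ m : α, IsCoatom m → IsComplemented m) :
    sSup {a : α | IsAtom a} = ⊤ := by
  by_contra hT
  obtain ⟨m, hm, hle⟩ := (eq_top_or_exists_le_coatom (sSup {a : α | IsAtom a})).resolve_left hT
  obtain ⟨c, hc⟩ := h m hm
  have hc_atom : IsAtom c := hc.symm.isAtom_iff_isCoatom.mpr hm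
  have hcm : c ≤ m := (le_sSup (s := {a : α | IsAtom a}) hc_atom).trans hle
  exact hc_atom.1 (hc.disjoint.eq_bot_of_ge hcm)

variable {S : Type u} [Ring S] {M : Type v} [AddCommGroup M] [Module S M]

theorem IsSemisimpleModule.of_isCoatom_isDirectSummand [IsCoatomic (Submodule S M)]
    (h : ∀ m : Submodule S M, IsCoatom m → IsDirectSummand m) : IsSemisimpleModule S M :=
  (isSemisimpleModule_iff S M).mpr <| complementedLattice_of_sSup_atoms_eq_top <|
    sSup_atoms_eq_top_of_isCoatom_isComplemented fun m hm =>
      isDirectSummand_iff_isComplemented.mp (h m hm)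

variable (R : Type u) [Ring R]

theorem isSemisimpleModule_mulOpposite_self_iff :
    IsSemisimpleModule Rᵐᵒᵖ R ↔ IsSemisimpleRing R := by
  rw [← isSemisimpleRing_mulOpposite_iff]
  exact (MulOpposite.opLinearEquiv Rᵐᵒᵖ : R ≃ₗ[Rᵐᵒᵖ] Rᵐᵒᵖ).isSemisimpleModule_iff

theorem isSemisimpleRing_of_isCoatom_isDirectSummand
    (h : ∀ m : Submodule Rᵐᵒᵖ R, IsCoatom m → IsDirectSummand m) : IsSemisimpleRing R := by
  have : Module.Finite Rᵐᵒᵖ R := .equiv (MulOpposite.opLinearEquiv Rᵐᵒᵖ).symm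
  exact (isSemisimpleModule_mulOpposite_self_iff R).mp (.of_isCoatom_isDirectSummand h)

theorem isSemisimpleRing_of_hasSIP_prod_quotient
    (h : ∀ m : Submodule Rᵐᵒᵖ R, IsCoatom m → HasSIP Rᵐᵒᵖ (R × (R ⧸ m))) : IsSemisimpleRing R :=
  isSemisimpleRing_of_isCoatom_isDirectSummand R fun m hm =>
    m.ker_mkQ ▸ (h m hm).isDirectSummand_ker_of_prod m.mkQ

theorem span_singleton_one_mulOpposite : Submodule.span Rᵐᵒᵖ {(1 : R)} = ⊤ :=
  Submodule.eq_top_iff'.mpr fun x =>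
    Submodule.mem_span_singleton.mpr ⟨MulOpposite.op x, by simp [MulOpposite.smul_eq_mul_unop]⟩

theorem twoGenerated_prod_quotient (m : Submodule Rᵐᵒᵖ R) : TwoGenerated Rᵐᵒᵖ (R × (R ⧸ m)) :=
  .prod (y := m.mkQ 1) (span_singleton_one_mulOpposite R) <| by
    rw [← Set.image_singleton, Submodule.span_image, span_singleton_one_mulOpposite,
      Submodule.map_top, Submodule.range_mkQ]

end Semisimplicity

/-- `R` is semisimple artinian iff `R_R` is SIP and every (2-generated) right
`R`-module has a SIP-cover, iff `R_R` is SIP and every (2-generated) right `R`-module has a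
SIP-envelope. -/
theorem statement_6 (R : Type u) [Ring R] :
    List.TFAE [
      IsSemisimpleRing R,
      HasSIP Rᵐᵒᵖ R ∧ ∀ (M : Type u) [AddCommGroup M] [Module Rᵐᵒᵖ M],
        HasCover Rᵐᵒᵖ (fun E => HasSIP Rᵐᵒᵖ E) M,
      HasSIP Rᵐᵒᵖ R ∧ ∀ (M : Type u) [AddCommGroup M] [Module Rᵐᵒᵖ M], TwoGenerated Rᵐᵒᵖ M →
        HasCover Rᵐᵒᵖ (fun E => HasSIP Rᵐᵒᵖ E) M,
      HasSIP Rᵐᵒᵖ R ∧ ∀ (M : Type u) [AddCommGroup M] [Module Rᵐᵒᵖ M],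
        HasEnvelope Rᵐᵒᵖ (fun E => HasSIP Rᵐᵒᵖ E) M,
      HasSIP Rᵐᵒᵖ R ∧ ∀ (M : Type u) [AddCommGroup M] [Module Rᵐᵒᵖ M], TwoGenerated Rᵐᵒᵖ M →
        HasEnvelope Rᵐᵒᵖ (fun E => HasSIP Rᵐᵒᵖ E) M] := by
  have hquot (m : Submodule Rᵐᵒᵖ R) (hm : IsCoatom m) : HasSIP Rᵐᵒᵖ (R ⧸ m) :=
    have := isSimpleModule_iff_isCoatom.mpr hm
    .of_isSemisimpleModule
  tfae_have 1 → 2 := fun _ =>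
    ⟨.of_isSemisimpleModule, fun _ _ _ => hasCover_of_mem .of_isSemisimpleModule⟩
  tfae_have 2 → 3 := fun h => ⟨h.1, fun M _ _ _ => h.2 M⟩
  tfae_have 3 → 1 := by
    rintro ⟨hR, hcover⟩
    refine isSemisimpleRing_of_hasSIP_prod_quotient R fun m hm => ?_
    obtain ⟨E, hE, ⟨e⟩⟩ := (hcover _ (twoGenerated_prod_quotient R m)).exists_linearEquiv_prod
      hR (hquot m hm)
    exact hE.congr e.symm
  tfae_have 1 → 4 := fun _ =>
    ⟨.of_isSemisimpleModule, fun _ _ _ => hasEnvelope_of_mem .of_isSemisimpleModule⟩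
  tfae_have 4 → 5 := fun h => ⟨h.1, fun M _ _ _ => h.2 M⟩
  tfae_have 5 → 1 := by
    rintro ⟨hR, henv⟩
    refine isSemisimpleRing_of_hasSIP_prod_quotient R fun m hm => ?_
    obtain ⟨E, hE, ⟨e⟩⟩ := (henv _ (twoGenerated_prod_quotient R m)).exists_linearEquiv_prod
      hR (hquot m hm)
    exact hE.congr e.symm
  tfae_finish
end

section
/- Let M = M₁ ⊕ ⋯ ⊕ Mₙ and N be right R-modules. If M is relatively CS-Rickart to N, then each direct summand Mᵢ is relatively CS-Rickart to N. -/
universe u v w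

universe v'

/-- Auxiliary: a retract of an `N`-CS-Rickart module is `N`-CS-Rickart. -/
theorem relCSRickart_retract {S : Type u} [Ring S] {M : Type v} {M' : Type v'} {N : Type w}
    [AddCommGroup M] [Module S M] [AddCommGroup M'] [Module S M']
    [AddCommGroup N] [Module S N]
    (f : M' →ₗ[S] M) (g : M →ₗ[S] M') (hgf : g ∘ₗ f = LinearMap.id)
    (h : RelCSRickart S M N) : RelCSRickart S M' N := by
  have hgf' : ∀ x : M', g (f x) = x := fun x =>
    congrArg (fun t : M' →ₗ[S] M' => t x) hgf
  have finj : Function.Injective f := fun a b hab => by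
    rw [← hgf' a, ← hgf' b, hab]
  intro φ
  set ψ : M →ₗ[S] N := φ ∘ₗ g with hψ
  obtain ⟨D, ⟨C, hDC1, hDC2⟩, hkerle, hess⟩ := h ψ
  have hψf : ∀ x : M', ψ (f x) = φ x := fun x => by
    simp [hψ, hgf']
  -- K = ker g ≤ ker ψ ≤ D
  have hKker : LinearMap.ker g ≤ LinearMap.ker ψ := fun x hx => by
    have hx' : g x = 0 := hx
    show φ (g x) = 0
    rw [hx', map_zero]
  have hKD : LinearMap.ker g ≤ D := hKker.trans hkerle
  refine ⟨Submodule.comap f D, ⟨Submodule.comap f (LinearMap.ker g ⊔ C), ?_, ?_⟩, ?_, ?_⟩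
  · -- A ⊓ B = ⊥
    rw [eq_bot_iff]
    intro x hx
    obtain ⟨hx1, hx2⟩ := Submodule.mem_inf.mp hx
    simp only [Submodule.mem_comap] at hx1 hx2
    obtain ⟨k, hk, c, hc, hkc⟩ := Submodule.mem_sup.mp hx2
    have hcD : c ∈ D := by
      have : c = f x - k := by rw [← hkc]; abel
      rw [this]
      exact D.sub_mem hx1 (hKD hk)
    have hc0 : c = 0 := by
      have : c ∈ D ⊓ C := ⟨hcD, hc⟩
      rwa [hDC1, Submodule.mem_bot] at this
    have : x = 0 := by
      have hfx : f x = k := by rw [← hkc, hc0, add_zero]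
      have : g (f x) = 0 := by rw [hfx]; exact hk
      rwa [hgf'] at this
    simp [this]
  · -- A ⊔ B = ⊤
    rw [eq_top_iff]
    intro x _
    have : f x ∈ D ⊔ C := by rw [hDC2]; trivial
    obtain ⟨d, hd, c, hc, hdc⟩ := Submodule.mem_sup.mp this
    have hdK : d - f (g d) ∈ LinearMap.ker g := by
      rw [LinearMap.mem_ker, map_sub, hgf', sub_self]
    have hcK : c - f (g c) ∈ LinearMap.ker g := by
      rw [LinearMap.mem_ker, map_sub, hgf', sub_self]
    have hgd : g d ∈ Submodule.comap f D := by
      simp only [Submodule.mem_comap]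
      have : f (g d) = d - (d - f (g d)) := by abel
      rw [this]
      exact D.sub_mem hd (hKD hdK)
    have hgc : g c ∈ Submodule.comap f (LinearMap.ker g ⊔ C) := by
      simp only [Submodule.mem_comap]
      have : f (g c) = c - (c - f (g c)) := by abel
      rw [this]
      exact Submodule.sub_mem _ (Submodule.mem_sup_right hc)
        (Submodule.mem_sup_left hcK)
    have hx : x = g d + g c := by
      rw [← hgf' x, ← hdc, map_add]
    rw [hx]
    exact Submodule.add_mem _ (Submodule.mem_sup_left hgd) (Submodule.mem_sup_right hgc)
  · -- ker φ ≤ comap f D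
    intro x hx
    simp only [Submodule.mem_comap]
    apply hkerle
    simp only [LinearMap.mem_ker] at *
    rw [hψf, hx]
  · -- essentiality
    intro K' hK'le hK'ne
    set L := Submodule.map f K' with hL
    have hLD : L ≤ D := Submodule.map_le_iff_le_comap.mpr hK'le
    have hLne : L ≠ ⊥ := by
      intro hbot
      apply hK'ne
      rw [eq_bot_iff]
      intro x hx
      have hfx : f x ∈ L := Submodule.mem_map_of_mem hx
      rw [hbot, Submodule.mem_bot] at hfx
      have : x = 0 := finj (by simpa using hfx)
      simp [this]
    have := hess L hLD hLne
    rw [Submodule.ne_bot_iff] at this ⊢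
    obtain ⟨y, hy, hyne⟩ := this
    obtain ⟨hy1, hy2⟩ := Submodule.mem_inf.mp hy
    obtain ⟨x, hxK', hfx⟩ := hy2
    refine ⟨x, Submodule.mem_inf.mpr ⟨?_, hxK'⟩, ?_⟩
    · rw [LinearMap.mem_ker, ← hψf, hfx]
      exact hy1
    · intro h0
      apply hyne
      rw [← hfx, h0, map_zero]

/-- if `M = M₁ ⊕ ⋯ ⊕ Mₙ` is relatively CS-Rickart to `N`, then so is each `Mᵢ`. -/
theorem statement_9 (R : Type u) [Ring R] (ι : Type) [Fintype ι]
    (M : ι → Type v) [∀ i, AddCommGroup (M i)] [∀ i, Module Rᵐᵒᵖ (M i)]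
    (N : Type w) [AddCommGroup N] [Module Rᵐᵒᵖ N]
    (h : RelCSRickart Rᵐᵒᵖ (∀ i, M i) N) :
    ∀ i, RelCSRickart Rᵐᵒᵖ (M i) N := by
  intro i
  haveI := Classical.decEq ι
  exact relCSRickart_retract (LinearMap.single Rᵐᵒᵖ M i) (LinearMap.proj i)
    (by ext x; simp) h
end

section
/- Let M = M₁ ⊕ ⋯ ⊕ Mₙ and N be right R-modules. If M is relatively d-CS-Rickart to N, then each direct summand Mᵢ is relatively d-CS-Rickart to N. -/
universe u v w

/-- Characterization of smallness of `A/D` in `M/D` without quotients. -/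
lemma small_char {S : Type u} [Ring S] {M : Type v} [AddCommGroup M] [Module S M]
    (D A : Submodule S M) (hDA : D ≤ A) :
    IsSmallSubmodule (Submodule.map D.mkQ A) ↔
      ∀ K : Submodule S M, D ≤ K → A ⊔ K = ⊤ → K = ⊤ := by
  constructor
  · intro hs K hDK hAK
    have h1 : Submodule.map D.mkQ A ⊔ Submodule.map D.mkQ K = ⊤ := by
      rw [← Submodule.map_sup, hAK, Submodule.map_top, Submodule.range_mkQ]
    have h2 := hs _ h1
    have h3 : Submodule.comap D.mkQ (Submodule.map D.mkQ K) = ⊤ := by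
      rw [h2, Submodule.comap_top]
    rwa [Submodule.comap_map_eq, Submodule.ker_mkQ, sup_eq_left.mpr hDK] at h3
  · intro hs K' hK'
    set K := Submodule.comap D.mkQ K' with hKdef
    have hD : D ≤ K := by
      intro x hx
      simp [hKdef, Submodule.mem_comap, Submodule.mkQ_apply,
        (Submodule.Quotient.mk_eq_zero D).mpr hx]
    have hmap : Submodule.map D.mkQ (A ⊔ K) = ⊤ := by
      rw [Submodule.map_sup, Submodule.map_comap_eq, Submodule.range_mkQ, top_inf_eq, hK']
    have hsup : A ⊔ K = ⊤ := by
      have := congrArg (Submodule.comap D.mkQ) hmap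
      rwa [Submodule.comap_map_eq, Submodule.ker_mkQ, Submodule.comap_top,
        sup_eq_left.mpr (le_trans hDA le_sup_left)] at this
    have hK : K = ⊤ := hs K hD hsup
    rw [eq_top_iff]
    intro y _
    obtain ⟨x, rfl⟩ := Submodule.mkQ_surjective D y
    have : x ∈ K := hK ▸ Submodule.mem_top
    exact this

/-- if `M = M₁ ⊕ ⋯ ⊕ Mₙ` is relatively d-CS-Rickart to `N`, then so is
each `Mᵢ`. -/
theorem statement_10 (R : Type u) [Ring R] (ι : Type) [Fintype ι]
    (M : ι → Type v) [∀ i, AddCommGroup (M i)] [∀ i, Module Rᵐᵒᵖ (M i)]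
    (N : Type w) [AddCommGroup N] [Module Rᵐᵒᵖ N]
    (h : RelDCSRickart Rᵐᵒᵖ (∀ i, M i) N) :
    ∀ i, RelDCSRickart Rᵐᵒᵖ (M i) N := by
  intro i φ
  classical
  set e : M i →ₗ[Rᵐᵒᵖ] (∀ j, M j) := LinearMap.single Rᵐᵒᵖ M i with he_def
  have hei : ∀ x : M i, e x i = x := fun x => Pi.single_eq_same i x
  have heinj : Function.Injective e := fun a b hab => by
    have := congrFun (congrArg (fun f => f) hab) i
    simpa [hei] using congrArg (fun f => f i) hab
  obtain ⟨D, hDsum, hDle, hsmall⟩ := h (e ∘ₗ φ)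
  rw [LinearMap.range_comp] at hDle hsmall
  have hDrange : D ≤ LinearMap.range e :=
    le_trans hDle (Submodule.map_le_iff_le_comap.mpr (fun x _ => ⟨x, rfl⟩))
  set D' : Submodule Rᵐᵒᵖ (M i) := Submodule.comap e D with hD'def
  have hmapD' : Submodule.map e D' = D := by
    rw [hD'def, Submodule.map_comap_eq, inf_eq_right.mpr hDrange]
  have hD'le : D' ≤ LinearMap.range φ := by
    intro x hx
    have hx' : e x ∈ Submodule.map e (LinearMap.range φ) := hDle hx
    obtain ⟨y, hy, hyx⟩ := hx'
    exact heinj hyx ▸ hy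
  refine ⟨D', ⟨?_, hD'le, ?_⟩⟩
  · -- D' is a direct summand of M i
    obtain ⟨C, hC1, hC2⟩ := hDsum
    refine ⟨Submodule.comap e C, ?_, ?_⟩
    · rw [hD'def, ← Submodule.comap_inf, hC1]
      exact LinearMap.ker_eq_bot.mpr heinj
    · rw [eq_top_iff]
      intro x _
      have : e x ∈ D ⊔ C := hC2 ▸ Submodule.mem_top
      obtain ⟨d, hd, c, hc, hdc⟩ := Submodule.mem_sup.mp this
      obtain ⟨y, hy⟩ := hDrange hd
      have hxy : e (x - y) ∈ C := by
        rw [map_sub, hy]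
        have : e x - d = c := by rw [← hdc]; abel
        rw [this]; exact hc
      refine Submodule.mem_sup.mpr ⟨y, ?_, x - y, hxy, by abel⟩
      show e y ∈ D
      rw [hy]; exact hd
  · -- smallness
    rw [small_char _ _ hD'le]
    rw [small_char _ _ hDle] at hsmall
    intro K hDK hsup
    set K₂ : Submodule Rᵐᵒᵖ (∀ j, M j) :=
      Submodule.map e K ⊔ LinearMap.ker (LinearMap.proj (R := Rᵐᵒᵖ) (φ := M) i) with hK₂def
    have hDK₂ : D ≤ K₂ := by
      calc D = Submodule.map e D' := hmapD'.symm
        _ ≤ Submodule.map e K := Submodule.map_mono hDK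
        _ ≤ K₂ := le_sup_left
    have hsup₂ : Submodule.map e (LinearMap.range φ) ⊔ K₂ = ⊤ := by
      rw [eq_top_iff]
      intro z _
      have hz1 : e (z i) ∈ Submodule.map e (LinearMap.range φ) ⊔ Submodule.map e K := by
        rw [← Submodule.map_sup, hsup]
        exact ⟨z i, Submodule.mem_top, rfl⟩
      have hz2 : z - e (z i) ∈ LinearMap.ker (LinearMap.proj (R := Rᵐᵒᵖ) (φ := M) i) := by
        simp [LinearMap.mem_ker, hei]
      have : z = e (z i) + (z - e (z i)) := by abel
      rw [this]
      have hle : Submodule.map e (LinearMap.range φ) ⊔ Submodule.map e K ≤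
          Submodule.map e (LinearMap.range φ) ⊔ K₂ :=
        sup_le le_sup_left (le_trans (le_sup_left : _ ≤ K₂) le_sup_right)
      have hle2 : LinearMap.ker (LinearMap.proj (R := Rᵐᵒᵖ) (φ := M) i) ≤
          Submodule.map e (LinearMap.range φ) ⊔ K₂ :=
        le_trans (le_sup_right : _ ≤ K₂) le_sup_right
      exact Submodule.add_mem _ (hle hz1) (hle2 hz2)
    have hK₂top : K₂ = ⊤ := hsmall K₂ hDK₂ hsup₂
    rw [eq_top_iff]
    intro x _
    have : e x ∈ K₂ := hK₂top ▸ Submodule.mem_top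
    obtain ⟨m, hm, c, hc, hmc⟩ := Submodule.mem_sup.mp this
    obtain ⟨k, hk, hke⟩ := hm
    have hc0 : c i = 0 := hc
    have : x = k := by
      have := congrArg (fun f => f i) hmc
      simpa [hke ▸ hei k, hc0, hei] using this.symm
    exact this ▸ hk
end

section
/- Let M be a right R-module with a decomposition M = M₁ ⊕ M₂. If M is a SIP-CS module satisfying the C2 condition, then M₁ is relatively CS-Rickart to M₂. -/
universe u v w

/-- if `M = M₁ ⊕ M₂` is a SIP-CS module with the C2 condition, then `M₁` is
relatively CS-Rickart to `M₂`. -/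
theorem statement_11 (R : Type u) [Ring R] (M₁ : Type v) (M₂ : Type v)
    [AddCommGroup M₁] [Module Rᵐᵒᵖ M₁] [AddCommGroup M₂] [Module Rᵐᵒᵖ M₂]
    (hsipcs : IsSIPCS Rᵐᵒᵖ (M₁ × M₂)) (hc2 : HasC2 Rᵐᵒᵖ (M₁ × M₂)) :
    RelCSRickart Rᵐᵒᵖ M₁ M₂ := by
  classical
  intro φ
  set G : Submodule Rᵐᵒᵖ (M₁ × M₂) := LinearMap.graph φ with hGdef
  set M₁0 : Submodule Rᵐᵒᵖ (M₁ × M₂) := (⊤ : Submodule Rᵐᵒᵖ M₁).prod ⊥ with hM₁0def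
  set V : Submodule Rᵐᵒᵖ (M₁ × M₂) := (⊥ : Submodule Rᵐᵒᵖ M₁).prod ⊤ with hVdef
  -- G is a direct summand with complement V
  have hGsum : IsDirectSummand G := by
    refine ⟨V, ?_, ?_⟩
    · rw [eq_bot_iff]
      intro z hz
      rw [Submodule.mem_inf] at hz
      obtain ⟨hg, hv⟩ := hz
      rw [LinearMap.mem_graph_iff] at hg
      obtain ⟨hx, -⟩ := hv
      simp only [SetLike.mem_coe, Submodule.mem_bot] at hx ⊢
      rw [hx] at hg
      simp only [map_zero] at hg
      exact Prod.ext hx hg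
    · rw [eq_top_iff]
      rintro ⟨x, y⟩ -
      rw [Submodule.mem_sup]
      refine ⟨(x, φ x), ?_, (0, y - φ x), ⟨(Submodule.mem_bot _).mpr rfl, trivial⟩, ?_⟩
      · rw [LinearMap.mem_graph_iff]
      · simp
  have hM₁0sum : IsDirectSummand M₁0 := by
    refine ⟨V, ?_, ?_⟩
    · rw [eq_bot_iff]
      intro z hz
      rw [Submodule.mem_inf] at hz
      obtain ⟨⟨-, hy⟩, hx, -⟩ := hz
      simp only [SetLike.mem_coe, Submodule.mem_bot] at hx hy ⊢
      exact Prod.ext hx hy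
    · rw [eq_top_iff]
      rintro ⟨x, y⟩ -
      rw [Submodule.mem_sup]
      exact ⟨(x, 0), ⟨trivial, (Submodule.mem_bot _).mpr rfl⟩,
        (0, y), ⟨(Submodule.mem_bot _).mpr rfl, trivial⟩, by simp⟩
  -- SIP-CS applied to the pair {G, M₁0}
  have hinf : (⨅ b : Bool, (if b then G else M₁0)) = (LinearMap.ker φ).prod ⊥ := by
    rw [iInf_bool_eq]
    simp only [if_true, if_false]
    ext ⟨x, y⟩
    simp only [Submodule.mem_inf, LinearMap.mem_graph_iff, Submodule.mem_prod,
      Submodule.mem_top, Submodule.mem_bot, LinearMap.mem_ker, true_and]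
    constructor
    · rintro ⟨hy, -, hy0⟩
      subst hy0
      exact ⟨hy.symm, rfl⟩
    · rintro ⟨hker, hy0⟩
      subst hy0
      exact ⟨hker.symm, trivial, rfl⟩
  have hess0 : EssentialInSummand ((LinearMap.ker φ).prod (⊥ : Submodule Rᵐᵒᵖ M₂)) := by
    rw [← hinf]
    refine hsipcs Bool (fun b => if b then G else M₁0) ?_
    intro b
    cases b
    · simpa using hM₁0sum
    · simpa using hGsum
  obtain ⟨D, hDsum, hle, hess⟩ := hess0
  -- the first projection is injective on D
  have hinj : ∀ d ∈ D, d.1 = 0 → d = 0 := by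
    intro d hd h1
    by_contra hne
    have hKle : Submodule.span Rᵐᵒᵖ {d} ≤ D := by
      rw [Submodule.span_le, Set.singleton_subset_iff]; exact hd
    have hKne : Submodule.span Rᵐᵒᵖ {d} ≠ ⊥ := by
      rw [Ne, Submodule.span_singleton_eq_bot]; exact hne
    have h := hess _ hKle hKne
    rw [Ne, eq_bot_iff] at h
    apply h
    rintro z ⟨⟨-, hz2⟩, hzK⟩
    obtain ⟨r, hr⟩ := Submodule.mem_span_singleton.mp hzK
    have hz1 : z.1 = 0 := by
      rw [← hr, Prod.smul_fst, h1, smul_zero]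
    simp only [Submodule.mem_bot] at hz2 ⊢
    exact Prod.ext hz1 hz2
  set D₁ : Submodule Rᵐᵒᵖ M₁ := D.map (LinearMap.fst Rᵐᵒᵖ M₁ M₂) with hD₁def
  -- D₁ × 0 is isomorphic to D, hence a direct summand by C2
  have hmemD₁0 : ∀ d : D, ((d : M₁ × M₂).1, (0 : M₂)) ∈ D₁.prod (⊥ : Submodule Rᵐᵒᵖ M₂) :=
    fun d => ⟨⟨(d : M₁ × M₂), d.2, rfl⟩, rfl⟩
  have hD₁0sum : IsDirectSummand (D₁.prod (⊥ : Submodule Rᵐᵒᵖ M₂)) := by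
    set f : ↥D →ₗ[Rᵐᵒᵖ] ↥(D₁.prod (⊥ : Submodule Rᵐᵒᵖ M₂)) :=
      LinearMap.codRestrict _ ((LinearMap.inl Rᵐᵒᵖ M₁ M₂ ∘ₗ LinearMap.fst Rᵐᵒᵖ M₁ M₂) ∘ₗ
        D.subtype) hmemD₁0 with hfdef
    have hfval : ∀ d : D, (f d : M₁ × M₂) = ((d : M₁ × M₂).1, 0) := fun d => rfl
    refine hc2 _ D hDsum ⟨LinearEquiv.symm (LinearEquiv.ofBijective f ⟨?_, ?_⟩)⟩
    · intro a b hab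
      have h1 : (a : M₁ × M₂).1 = (b : M₁ × M₂).1 := by
        have h2 : (f a : M₁ × M₂).1 = (f b : M₁ × M₂).1 := by rw [hab]
        rw [hfval, hfval] at h2
        exact h2
      have hsub : ((a : M₁ × M₂) - (b : M₁ × M₂)) ∈ D := sub_mem a.2 b.2
      have : (a : M₁ × M₂) - (b : M₁ × M₂) = 0 := by
        apply hinj _ hsub
        simp [h1]
      exact Subtype.ext (sub_eq_zero.mp this)
    · rintro ⟨⟨x, y⟩, hx, hy⟩
      obtain ⟨m, hm, hm1⟩ := hx
      simp only [SetLike.mem_coe, Submodule.mem_bot] at hy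
      simp only [LinearMap.fst_apply] at hm1
      refine ⟨⟨m, hm⟩, ?_⟩
      apply Subtype.ext
      rw [hfval]
      exact Prod.ext hm1 hy.symm
  -- hence D₁ is a direct summand of M₁
  obtain ⟨B, hBinf, hBsup⟩ := hD₁0sum
  have hD₁sum : IsDirectSummand D₁ := by
    refine ⟨(M₁0 ⊓ B).map (LinearMap.fst Rᵐᵒᵖ M₁ M₂), ?_, ?_⟩
    · rw [eq_bot_iff]
      intro x hx
      rw [Submodule.mem_inf] at hx
      obtain ⟨hxD₁, hxC⟩ := hx
      obtain ⟨⟨x', y⟩, hmem, hfst⟩ := Submodule.mem_map.mp hxC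
      rw [Submodule.mem_inf] at hmem
      obtain ⟨⟨-, hy⟩, hB⟩ := hmem
      simp only [SetLike.mem_coe, Submodule.mem_bot] at hy
      simp only [LinearMap.fst_apply] at hfst
      subst hfst
      subst hy
      have hmem2 : ((x', (0 : M₂)) : M₁ × M₂) ∈ D₁.prod (⊥ : Submodule Rᵐᵒᵖ M₂) ⊓ B :=
        ⟨⟨hxD₁, rfl⟩, hB⟩
      rw [hBinf, Submodule.mem_bot] at hmem2
      simp only [Submodule.mem_bot]
      exact congrArg Prod.fst hmem2
    · rw [eq_top_iff]
      rintro x -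
      have hx : ((x, 0) : M₁ × M₂) ∈ D₁.prod (⊥ : Submodule Rᵐᵒᵖ M₂) ⊔ B := by
        rw [hBsup]; trivial
      rw [Submodule.mem_sup] at hx
      obtain ⟨p, hp, c, hc, hsum⟩ := hx
      obtain ⟨hp1, hp2⟩ := hp
      simp only [SetLike.mem_coe, Submodule.mem_bot] at hp2
      rw [Submodule.mem_sup]
      refine ⟨p.1, hp1, x - p.1, ?_, by abel⟩
      refine Submodule.mem_map.mpr ⟨(x - p.1, 0), ?_, rfl⟩
      rw [Submodule.mem_inf]
      refine ⟨⟨trivial, rfl⟩, ?_⟩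
      have hc' : c = (x - p.1, 0) := by
        have h1 : c = ((x, 0) : M₁ × M₂) - p := by rw [← hsum]; abel
        rw [h1]
        refine Prod.ext rfl ?_
        show (0 : M₂) - p.2 = 0
        rw [hp2, sub_zero]
      rw [← hc']
      exact hc
  -- ker φ is essential in D₁
  refine ⟨D₁, hD₁sum, ?_, ?_⟩
  · intro k hk
    exact ⟨(k, 0), hle ⟨hk, rfl⟩, rfl⟩
  · intro K hKle hKne
    obtain ⟨x, hxK, hx0⟩ := Submodule.exists_mem_ne_zero_of_ne_bot hKne
    obtain ⟨⟨x', y⟩, hm, hfst⟩ := hKle hxK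
    simp only [LinearMap.fst_apply] at hfst
    subst hfst
    have hK'le : Submodule.span Rᵐᵒᵖ {((x', y) : M₁ × M₂)} ≤ D := by
      rw [Submodule.span_le, Set.singleton_subset_iff]; exact hm
    have hK'ne : Submodule.span Rᵐᵒᵖ {((x', y) : M₁ × M₂)} ≠ ⊥ := by
      rw [Ne, Submodule.span_singleton_eq_bot]
      intro h
      exact hx0 (congrArg Prod.fst h)
    have h := hess _ hK'le hK'ne
    obtain ⟨z, ⟨⟨hz1, hz2⟩, hzK'⟩, hz0⟩ := Submodule.exists_mem_ne_zero_of_ne_bot h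
    simp only [SetLike.mem_coe, Submodule.mem_bot] at hz2
    obtain ⟨r, hr⟩ := Submodule.mem_span_singleton.mp hzK'
    rw [Ne, eq_bot_iff]
    intro habs
    have hz1K : z.1 ∈ K := by
      rw [← hr, Prod.smul_fst]
      exact Submodule.smul_mem K r hxK
    have : z.1 = 0 := by
      have := habs ⟨hz1, hz1K⟩
      simpa using this
    exact hz0 (Prod.ext this hz2)
end
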